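/- Let G(u) = Bu be linear with B ∈ ℝ^{K×N}, Λ, C positive definite, and L := BᵀΛ⁻¹B + C⁻¹. The stochastic Newton proposal v_SN := u − L⁻¹(Lu − BᵀΛ⁻¹d − C⁻¹u₀) + w, where w ∼ N(0, L⁻¹) (so v_SN = u_MAP + w), has the same distribution as the rMAP sample û_MAP = L⁻¹(BᵀΛ⁻¹(d+θ) + C⁻¹(u₀+ε)) where θ ∼ N(0, Λ), ε ∼ N(0, C) are independent; both are N(u_MAP, L⁻¹). -/

import Mathlib

/-!
Since the cost is quadratic, one Newton step from any `u` lands exactly on `u_MAP`, so the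
stochastic Newton proposal is `u_MAP + w`. The rMAP sample is
`u_MAP + L⁻¹BᵀΛ⁻¹ θ + L⁻¹C⁻¹ ε`, a sum of independent centred Gaussians whose covariances add up
to `L⁻¹(BᵀΛ⁻¹B + C⁻¹)L⁻¹ = L⁻¹`.
-/

open MeasureTheory ProbabilityTheory Matrix

/-- A random vector `X` is Gaussian with mean `m` and covariance `S` iff every
one-dimensional linear projection has the corresponding real Gaussian law. -/
def IsGaussianVec {Ω : Type} [MeasurableSpace Ω] {ι : Type} [Fintype ι]
    (P : Measure Ω) (X : Ω → ι → ℝ) (m : ι → ℝ) (S : Matrix ι ι ℝ) : Prop :=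
  ∀ a : ι → ℝ, P.map (fun ω => a ⬝ᵥ X ω)
    = gaussianReal (a ⬝ᵥ m) ((a ⬝ᵥ S.mulVec a).toNNReal)

namespace IsGaussianVec

variable {Ω : Type} [MeasurableSpace Ω] {ι κ : Type} [Fintype ι] [Fintype κ] {P : Measure Ω}
  {X Y : Ω → ι → ℝ} {m m' : ι → ℝ} {S S' : Matrix ι ι ℝ}

theorem hasLaw_dotProduct (hX : IsGaussianVec P X m S) (a : ι → ℝ) :
    HasLaw (fun ω => a ⬝ᵥ X ω) (gaussianReal (a ⬝ᵥ m) ((a ⬝ᵥ S *ᵥ a).toNNReal)) P :=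
  ⟨.of_map_ne_zero (by rw [hX a]; exact IsProbabilityMeasure.ne_zero _), hX a⟩

theorem const_add (hX : IsGaussianVec P X m S) (c : ι → ℝ) :
    IsGaussianVec P (fun ω => c + X ω) (c + m) S := by
  intro a
  simp only [dotProduct_add]
  rw [(gaussianReal_const_add (hX.hasLaw_dotProduct a) (a ⬝ᵥ c)).map_eq, add_comm]

theorem mulVec (hX : IsGaussianVec P X m S) (M : Matrix κ ι ℝ) :
    IsGaussianVec P (fun ω => M *ᵥ X ω) (M *ᵥ m) (M * S * Mᵀ) := by
  intro a
  have hquad : (a ᵥ* M) ⬝ᵥ S *ᵥ (a ᵥ* M) = a ⬝ᵥ (M * S * Mᵀ) *ᵥ a := by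
    rw [← mulVec_transpose, mulVec_mulVec, dotProduct_mulVec, dotProduct_mulVec,
      mulVec_transpose, vecMul_vecMul, Matrix.mul_assoc]
  simp_rw [← hquad, dotProduct_mulVec a M]
  exact hX (a ᵥ* M)

theorem add_of_indepFun (hX : IsGaussianVec P X m S) (hY : IsGaussianVec P Y m' S')
    (hS : S.PosSemidef) (hS' : S'.PosSemidef) (hXY : IndepFun X Y P) :
    IsGaussianVec P (fun ω => X ω + Y ω) (m + m') (S + S') := by
  intro a
  have hindep : IndepFun (fun ω => a ⬝ᵥ X ω) (fun ω => a ⬝ᵥ Y ω) P :=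
    hXY.comp (φ := (a ⬝ᵥ ·)) (ψ := (a ⬝ᵥ ·)) (by fun_prop) (by fun_prop)
  simp only [dotProduct_add, add_mulVec]
  rw [Real.toNNReal_add (by simpa using hS.dotProduct_mulVec_nonneg a)
    (by simpa using hS'.dotProduct_mulVec_nonneg a)]
  exact gaussianReal_add_gaussianReal_of_indepFun hindep (hX a) (hY a)

end IsGaussianVec

namespace Matrix

variable {α ι κ : Type} [CommRing α] [Fintype ι] [Fintype κ] [DecidableEq ι] [DecidableEq κ]

-- No invertibility needed: a singular `A` has `A⁻¹ = 0`.
theorem nonsing_inv_mul_self_mul_nonsing_inv (A : Matrix ι ι α) : A⁻¹ * A * A⁻¹ = A⁻¹ := by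
  by_cases hA : IsUnit A.det
  · rw [nonsing_inv_mul A hA, Matrix.one_mul]
  · rw [nonsing_inv_apply_not_isUnit A hA, Matrix.mul_zero]

theorem sub_nonsing_inv_mulVec_sub {A : Matrix ι ι α} (hA : IsUnit A.det) (u g : ι → α) :
    u - A⁻¹ *ᵥ (A *ᵥ u - g) = A⁻¹ *ᵥ g := by
  rw [mulVec_sub, mulVec_mulVec, nonsing_inv_mul A hA, one_mulVec, sub_sub_cancel]

theorem rMAP_covariance_eq_inv (B : Matrix κ ι α) {Λ : Matrix κ κ α} {C : Matrix ι ι α}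
    (hΛ : Λ.IsSymm) (hC : C.IsSymm) {L : Matrix ι ι α} (hL : L = Bᵀ * Λ⁻¹ * B + C⁻¹) :
    L⁻¹ * (Bᵀ * Λ⁻¹) * Λ * (L⁻¹ * (Bᵀ * Λ⁻¹))ᵀ + L⁻¹ * C⁻¹ * C * (L⁻¹ * C⁻¹)ᵀ = L⁻¹ := by
  have hLsymm : Lᵀ = L := by
    simp only [hL, transpose_add, transpose_mul, transpose_nonsing_inv, hΛ.eq, hC.eq,
      transpose_transpose, Matrix.mul_assoc]
  simp only [transpose_mul, transpose_nonsing_inv, hΛ.eq, hC.eq, hLsymm, transpose_transpose]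
  calc _ = L⁻¹ * (Bᵀ * (Λ⁻¹ * Λ * Λ⁻¹) * B + C⁻¹ * C * C⁻¹) * L⁻¹ := by
          simp only [Matrix.mul_add, Matrix.add_mul, Matrix.mul_assoc]
    _ = L⁻¹ * L * L⁻¹ := by
          rw [nonsing_inv_mul_self_mul_nonsing_inv, nonsing_inv_mul_self_mul_nonsing_inv, hL]
    _ = L⁻¹ := nonsing_inv_mul_self_mul_nonsing_inv L

theorem posDef_transpose_mul_inv_mul_add_inv {Λ : Matrix κ κ ℝ} {C : Matrix ι ι ℝ}
    (hΛ : Λ.PosSemidef) (hC : C.PosDef) (B : Matrix κ ι ℝ) : (Bᵀ * Λ⁻¹ * B + C⁻¹).PosDef := by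
  refine PosDef.posSemidef_add ?_ hC.inv
  simpa using hΛ.inv.conjTranspose_mul_mul_same B

end Matrix

theorem stochastic_newton_eq_rMAP_linear_general {K N : ℕ}
    (B : Matrix (Fin K) (Fin N) ℝ)
    (Λ : Matrix (Fin K) (Fin K) ℝ) (C : Matrix (Fin N) (Fin N) ℝ)
    (hΛ : Λ.PosDef) (hC : C.PosDef)
    (L : Matrix (Fin N) (Fin N) ℝ) (hL : L = Bᵀ * Λ⁻¹ * B + C⁻¹)
    (d : Fin K → ℝ) (u0 u : Fin N → ℝ)
    (uMAP : Fin N → ℝ)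
    (huMAP : uMAP = L⁻¹.mulVec ((Bᵀ * Λ⁻¹).mulVec d + C⁻¹.mulVec u0))
    {Ω : Type} [MeasurableSpace Ω] (P : Measure Ω)
    (θ : Ω → (Fin K → ℝ)) (ε : Ω → (Fin N → ℝ)) (w : Ω → (Fin N → ℝ))
    (hθ : IsGaussianVec P θ 0 Λ) (hε : IsGaussianVec P ε 0 C)
    (hw : IsGaussianVec P w 0 L⁻¹)
    (hindep : IndepFun θ ε P) :
    IsGaussianVec P
        (fun ω => u - L⁻¹.mulVec (L.mulVec u - (Bᵀ * Λ⁻¹).mulVec d - C⁻¹.mulVec u0)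
            + w ω)
        uMAP L⁻¹
      ∧ IsGaussianVec P
        (fun ω => L⁻¹.mulVec ((Bᵀ * Λ⁻¹).mulVec (d + θ ω) + C⁻¹.mulVec (u0 + ε ω)))
        uMAP L⁻¹ := by
  have hLdet : IsUnit L.det := (isUnit_iff_isUnit_det L).1
    (hL ▸ (posDef_transpose_mul_inv_mul_add_inv hΛ.posSemidef hC B).isUnit)
  constructor
  · rw [sub_sub, sub_nonsing_inv_mulVec_sub hLdet, ← huMAP]
    simpa only [add_zero] using hw.const_add uMAP
  · have hrMAP : (fun ω => L⁻¹ *ᵥ ((Bᵀ * Λ⁻¹) *ᵥ (d + θ ω) + C⁻¹ *ᵥ (u0 + ε ω)))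
        = fun ω => uMAP + ((L⁻¹ * (Bᵀ * Λ⁻¹)) *ᵥ θ ω + (L⁻¹ * C⁻¹) *ᵥ ε ω) := by
      ext ω : 1
      simp only [huMAP, mulVec_add, ← mulVec_mulVec]
      abel
    have hnoise := (hθ.mulVec (L⁻¹ * (Bᵀ * Λ⁻¹))).add_of_indepFun (hε.mulVec (L⁻¹ * C⁻¹))
      (hΛ.posSemidef.mul_mul_conjTranspose_same _) (hC.posSemidef.mul_mul_conjTranspose_same _)
      (hindep.comp (φ := ((L⁻¹ * (Bᵀ * Λ⁻¹)) *ᵥ ·)) (ψ := ((L⁻¹ * C⁻¹) *ᵥ ·))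
        (by fun_prop) (by fun_prop))
    rw [hrMAP]
    simpa only [mulVec_zero, add_zero, rMAP_covariance_eq_inv B
      (isHermitian_iff_isSymm.1 hΛ.isHermitian) (isHermitian_iff_isSymm.1 hC.isHermitian) hL]
      using hnoise.const_add uMAP

theorem stochastic_newton_eq_rMAP_linear {K N : ℕ}
    (B : Matrix (Fin K) (Fin N) ℝ)
    (Λ : Matrix (Fin K) (Fin K) ℝ) (C : Matrix (Fin N) (Fin N) ℝ)
    (hΛ : Λ.PosDef) (hC : C.PosDef)
    (L : Matrix (Fin N) (Fin N) ℝ) (hL : L = Bᵀ * Λ⁻¹ * B + C⁻¹)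
    (d : Fin K → ℝ) (u0 u : Fin N → ℝ)
    (uMAP : Fin N → ℝ)
    (huMAP : uMAP = L⁻¹.mulVec ((Bᵀ * Λ⁻¹).mulVec d + C⁻¹.mulVec u0))
    {Ω : Type} [MeasurableSpace Ω] (P : Measure Ω) [IsProbabilityMeasure P]
    (θ : Ω → (Fin K → ℝ)) (ε : Ω → (Fin N → ℝ)) (w : Ω → (Fin N → ℝ))
    (hθm : Measurable θ) (hεm : Measurable ε) (hwm : Measurable w)
    (hθ : IsGaussianVec P θ 0 Λ) (hε : IsGaussianVec P ε 0 C)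
    (hw : IsGaussianVec P w 0 L⁻¹)
    (hindep : IndepFun θ ε P) :
    IsGaussianVec P
        (fun ω => u - L⁻¹.mulVec (L.mulVec u - (Bᵀ * Λ⁻¹).mulVec d - C⁻¹.mulVec u0)
            + w ω)
        uMAP L⁻¹
      ∧ IsGaussianVec P
        (fun ω => L⁻¹.mulVec ((Bᵀ * Λ⁻¹).mulVec (d + θ ω) + C⁻¹.mulVec (u0 + ε ω)))
        uMAP L⁻¹ :=
  stochastic_newton_eq_rMAP_linear_general B Λ C hΛ hC L hL d u0 u uMAP huMAP P θ ε w hθ hε hw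
    hindep
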